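/- Let ℝ^{2d} = V_1 ⊕ V_2 where V_1, V_2 are A-invariant subspaces for a matrix A ∈ GL_{2d}(ℤ), such that V_1 ∩ ℤ^{2d} = {0}. Then there exists C > 0 such that for every nonzero n ∈ ℤ^{2d}, dist(n, V_1) ≥ C / ‖n‖^m, where m = dim V_1. -/

import Mathlib

open Polynomial Matrix

/-! ### Auxiliary lemmas for Katznelson's Diophantine lemma -/

lemma aeval_restrict_apply' {E : Type*} [AddCommGroup E] [Module ℝ E] (f : E →ₗ[ℝ] E)
    (V : Submodule ℝ E) (hV : ∀ x ∈ V, f x ∈ V) (q : ℝ[X]) {x : E} (hx : x ∈ V) :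
    (Polynomial.aeval f q) x = ((Polynomial.aeval (f.restrict hV) q ⟨x, hx⟩ : V) : E) := by
  induction q using Polynomial.induction_on' with
  | add p q hp hq => simp [hp, hq]
  | monomial n c =>
      simp only [aeval_monomial, Module.End.mul_apply, Module.algebraMap_end_apply,
        Module.End.pow_restrict n hV, LinearMap.restrict_apply, SetLike.val_smul]

lemma coprime_of_no_common_root' (p q : ℝ[X]) (hp : p ≠ 0)
    (h : ∀ μ : ℂ, ¬((p.map (algebraMap ℝ ℂ)).IsRoot μ ∧ (q.map (algebraMap ℝ ℂ)).IsRoot μ)) :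
    IsCoprime p q := by
  classical
  by_contra hc
  rw [← EuclideanDomain.gcd_isUnit_iff] at hc
  set g := EuclideanDomain.gcd p q with hg
  have hg0 : g ≠ 0 := fun h0 => hp (EuclideanDomain.gcd_eq_zero_iff.mp h0).1
  have hdeg : 0 < g.degree := by
    rcases lt_or_ge 0 g.degree with h' | h'
    · exact h'
    · exact absurd (Polynomial.isUnit_iff_degree_eq_zero.mpr
        (le_antisymm h' (zero_le_degree_iff.mpr hg0))) hc
  have hdegC : 0 < (g.map (algebraMap ℝ ℂ)).degree := by
    rwa [Polynomial.degree_map_eq_of_injective (algebraMap ℝ ℂ).injective]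
  obtain ⟨μ, hμ⟩ := Complex.exists_root hdegC
  refine h μ ⟨?_, ?_⟩
  · obtain ⟨r, hr⟩ := EuclideanDomain.gcd_dvd_left p q
    rw [show p = g * r from hr, Polynomial.map_mul]
    simpa using Or.inl hμ
  · obtain ⟨r, hr⟩ := EuclideanDomain.gcd_dvd_right p q
    rw [show q = g * r from hr, Polynomial.map_mul]
    simpa using Or.inl hμ

lemma abs_det_le_fact' {k : ℕ} (M : Matrix (Fin k) (Fin k) ℝ) (r : Fin k → ℝ)
    (h : ∀ i j, |M i j| ≤ r i * r j) :
    |M.det| ≤ (Nat.factorial k : ℝ) * (∏ i, r i) ^ 2 := by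
  rw [Matrix.det_apply]
  refine (Finset.abs_sum_le_sum_abs _ _).trans ?_
  have key : ∀ σ : Equiv.Perm (Fin k), |Equiv.Perm.sign σ • ∏ i, M (σ i) i| ≤ (∏ i, r i) ^ 2 := by
    intro σ
    have habs : |Equiv.Perm.sign σ • ∏ i, M (σ i) i| = |∏ i, M (σ i) i| := by
      rcases Int.units_eq_one_or (Equiv.Perm.sign σ) with h' | h' <;> simp [h']
    rw [habs, Finset.abs_prod]
    have h2 : ∏ i, |M (σ i) i| ≤ ∏ i, r (σ i) * r i :=
      Finset.prod_le_prod (fun i _ => abs_nonneg _) (fun i _ => h _ _)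
    refine h2.trans ?_
    rw [Finset.prod_mul_distrib, Equiv.prod_comp σ r, sq]
  calc ∑ σ : Equiv.Perm (Fin k), |Equiv.Perm.sign σ • ∏ i, M (σ i) i|
      ≤ (Finset.univ : Finset (Equiv.Perm (Fin k))).card • ((∏ i, r i) ^ 2) :=
        Finset.sum_le_card_nsmul _ _ _ (fun σ _ => key σ)
    _ = (Nat.factorial k : ℝ) * (∏ i, r i) ^ 2 := by
        simp [Finset.card_univ, Fintype.card_perm, nsmul_eq_mul]

lemma det_gram_ne_zero' {ι : Type*} [Fintype ι] [DecidableEq ι] {k : ℕ}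
    (B : Matrix ι (Fin k) ℝ)
    (h : LinearIndependent ℝ (fun j i => B i j)) : (Bᵀ * B).det ≠ 0 := by
  intro h0
  obtain ⟨y, hy0, hy⟩ := Matrix.exists_mulVec_eq_zero_iff.mpr h0
  have hBy : B.mulVec y = 0 := by
    have h1 : dotProduct (B.mulVec y) (B.mulVec y) = 0 := by
      rw [Matrix.dotProduct_mulVec, ← Matrix.mulVec_transpose, Matrix.mulVec_mulVec, hy,
        zero_dotProduct]
    exact dotProduct_self_eq_zero.mp h1
  have hsum : ∑ j, y j • (fun i => B i j) = 0 := by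
    funext i
    have := congrFun hBy i
    simpa [Matrix.mulVec, dotProduct, mul_comm, Finset.sum_apply] using this
  exact hy0 (funext (Fintype.linearIndependent_iff.mp h y hsum))

noncomputable def annIdeal' {E : Type*} [AddCommGroup E] [Module ℝ E] (f : E →ₗ[ℝ] E) (x : E) :
    Ideal ℝ[X] where
  carrier := {q | Polynomial.aeval f q x = 0}
  zero_mem' := by simp
  add_mem' := by
    intro p q hp hq
    simp only [Set.mem_setOf_eq, map_add, LinearMap.add_apply] at *
    rw [hp, hq, add_zero]
  smul_mem' := by
    intro c q hq
    simp only [Set.mem_setOf_eq, smul_eq_mul, _root_.map_mul, Module.End.mul_apply] at *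
    rw [hq, map_zero]

lemma mem_annIdeal_iff' {E : Type*} [AddCommGroup E] [Module ℝ E] (f : E →ₗ[ℝ] E) (x : E)
    (q : ℝ[X]) : q ∈ annIdeal' f x ↔ Polynomial.aeval f q x = 0 := Iff.rfl

lemma exists_ann_generator' {E : Type*} [AddCommGroup E] [Module ℝ E] (f : E →ₗ[ℝ] E) (x : E) :
    ∃ g : ℝ[X], ∀ q, Polynomial.aeval f q x = 0 ↔ g ∣ q := by
  have : (annIdeal' f x).IsPrincipal := IsPrincipalIdealRing.principal _
  refine ⟨Submodule.IsPrincipal.generator (annIdeal' f x), fun q => ?_⟩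
  rw [← mem_annIdeal_iff' f x q]
  conv_lhs => rw [← Ideal.span_singleton_generator (annIdeal' f x)]
  rw [Ideal.mem_span_singleton]

lemma aeval_comm_apply' {E : Type*} [AddCommGroup E] [Module ℝ E] (f : E →ₗ[ℝ] E)
    (p q : ℝ[X]) (x : E) :
    Polynomial.aeval f p (Polynomial.aeval f q x)
      = Polynomial.aeval f q (Polynomial.aeval f p x) := by
  rw [← Module.End.mul_apply, ← Module.End.mul_apply, ← _root_.map_mul, ← _root_.map_mul, mul_comm]

lemma indep_orbit' {E : Type*} [AddCommGroup E] [Module ℝ E] (f : E →ₗ[ℝ] E)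
    (v u₁ u₂ : E) (p₁ p₂ a b : ℝ[X]) (hab : a * p₁ + b * p₂ = 1)
    (hu₁v : Polynomial.aeval f (b * p₂) v = u₁) (hu₂v : Polynomial.aeval f (a * p₁) v = u₂)
    (h₁ : Polynomial.aeval f p₁ u₁ = 0) (h₂ : Polynomial.aeval f p₂ u₂ = 0)
    (hu₂ : u₂ ≠ 0) (t : ℕ)
    (hind : LinearIndependent ℝ (fun j : Fin t => (f ^ (j : ℕ)) u₁)) :
    LinearIndependent ℝ (fun j : Fin (t + 1) => (f ^ (j : ℕ)) v) := by
  classical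
  by_contra hdep
  obtain ⟨dcoef, hsum, j₀, hj₀⟩ := Fintype.not_linearIndependent_iff.mp hdep
  set D : ℝ[X] := ∑ j : Fin (t + 1), Polynomial.C (dcoef j) * Polynomial.X ^ (j : ℕ) with hDdef
  have haevalCX : ∀ (c : ℝ) (k : ℕ) (x : E),
      Polynomial.aeval f (Polynomial.C c * Polynomial.X ^ k) x = c • (f ^ k) x := by
    intro c k x
    simp [_root_.map_mul, Polynomial.aeval_C, Polynomial.aeval_X_pow, Module.End.mul_apply,
      Module.algebraMap_end_apply]
  have hDv : Polynomial.aeval f D v = 0 := by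
    rw [hDdef, map_sum, LinearMap.sum_apply, ← hsum]
    exact Finset.sum_congr rfl (fun j _ => haevalCX _ _ _)
  have hcoeff : ∀ j : Fin (t + 1), D.coeff (j : ℕ) = dcoef j := by
    intro j
    rw [hDdef, Polynomial.finset_sum_coeff]
    rw [Finset.sum_eq_single j]
    · simp
    · intro k _ hkj
      simp only [Polynomial.coeff_C_mul, Polynomial.coeff_X_pow]
      rw [if_neg (fun hjk => hkj (Fin.val_injective hjk.symm)), mul_zero]
    · simp
  have hD0 : D ≠ 0 := fun h0 => hj₀ (by rw [← hcoeff j₀, h0, Polynomial.coeff_zero])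
  have hDnat : D.natDegree ≤ t := by
    refine Polynomial.natDegree_sum_le_of_forall_le _ _ (fun j _ => ?_)
    refine (Polynomial.natDegree_C_mul_le _ _).trans ?_
    simpa [Polynomial.natDegree_X_pow] using Fin.is_le j
  have hDu₁ : Polynomial.aeval f D u₁ = 0 := by
    rw [← hu₁v, aeval_comm_apply', hDv, map_zero]
  have hDu₂ : Polynomial.aeval f D u₂ = 0 := by
    rw [← hu₂v, aeval_comm_apply', hDv, map_zero]
  obtain ⟨g, hg⟩ := exists_ann_generator' f u₂
  have hgD : g ∣ D := (hg D).mp hDu₂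
  have hgp₂ : g ∣ p₂ := (hg p₂).mp h₂
  have hg0 : g ≠ 0 := by
    rintro rfl
    exact hD0 (zero_dvd_iff.mp hgD)
  have hgnotunit : ¬ IsUnit g := by
    intro hu
    apply hu₂
    have h1 : Polynomial.aeval f (1 : ℝ[X]) u₂ = 0 := by
      obtain ⟨w, hw⟩ := hu.exists_right_inv
      rw [(hg 1).mpr ⟨w, hw.symm⟩]
    simpa using h1
  have hgdeg : 1 ≤ g.natDegree := by
    rcases Nat.eq_zero_or_pos g.natDegree with h0 | h1
    · exfalso
      have hC := Polynomial.eq_C_of_natDegree_eq_zero h0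
      have hne : g.coeff 0 ≠ 0 := fun hz => hg0 (by rw [hC, hz, map_zero])
      exact hgnotunit (hC ▸ Polynomial.isUnit_C.mpr (isUnit_iff_ne_zero.mpr hne))
    · exact h1
  obtain ⟨h, hDgh⟩ := hgD
  have hh0 : h ≠ 0 := fun h0 => hD0 (by rw [hDgh, h0, mul_zero])
  obtain ⟨α, β, hαβ⟩ : IsCoprime p₁ g := by
    obtain ⟨x, hx⟩ := hgp₂
    exact ⟨a, b * x, by rw [hx] at hab; linear_combination hab⟩
  have hhu₁ : Polynomial.aeval f h u₁ = 0 := by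
    have hrw : h = (α * h) * p₁ + β * D := by rw [hDgh]; linear_combination (-h) * hαβ
    rw [hrw, map_add, LinearMap.add_apply, _root_.map_mul, Module.End.mul_apply, h₁, map_zero,
      _root_.map_mul, Module.End.mul_apply, hDu₁, map_zero, add_zero]
  have hmul : D.natDegree = g.natDegree + h.natDegree := by
    rw [hDgh, Polynomial.natDegree_mul hg0 hh0]
  have hhdeg : h.natDegree < t := by omega
  have hzero : ∀ j : Fin t, h.coeff (j : ℕ) = 0 := by
    refine Fintype.linearIndependent_iff.mp hind _ ?_
    have hrange := Polynomial.aeval_eq_sum_range' (R := ℝ) hhdeg f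
    calc ∑ j : Fin t, h.coeff (j : ℕ) • (f ^ (j : ℕ)) u₁
        = (∑ i ∈ Finset.range t, h.coeff i • f ^ i) u₁ := by
          rw [← Fin.sum_univ_eq_sum_range (fun i => h.coeff i • f ^ i) t]
          simp [LinearMap.sum_apply]
      _ = Polynomial.aeval f h u₁ := by rw [← hrange]
      _ = 0 := hhu₁
  apply hh0
  ext i
  rcases lt_or_ge i t with hi | hi
  · simpa using hzero ⟨i, hi⟩
  · simp [Polynomial.coeff_eq_zero_of_natDegree_lt (lt_of_lt_of_le hhdeg hi)]

set_option maxHeartbeats 2000000 in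
/-- Katznelson's Diophantine lemma: Let `ℝ^{2d} = V₁ ⊕ V₂` with `V₁, V₂`
invariant under `A ∈ GL_{2d}(ℤ)`, such that the restrictions of `A` to `V₁` and `V₂`
have no common (complex) eigenvalue, and `V₁ ∩ ℤ^{2d} = {0}`.  Then there is `C > 0`
such that every nonzero `n ∈ ℤ^{2d}` satisfies `dist(n, V₁) ≥ C / ‖n‖^m`, `m = dim V₁`. -/
theorem diophantine_distance_to_invariant_subspace (d : ℕ)
    (A : Matrix (Fin (2 * d)) (Fin (2 * d)) ℤ) (hA : IsUnit A.det)
    (f : EuclideanSpace ℝ (Fin (2 * d)) →ₗ[ℝ] EuclideanSpace ℝ (Fin (2 * d)))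
    (hf : f = Matrix.toEuclideanLin (A.map ((↑) : ℤ → ℝ)))
    (V₁ V₂ : Submodule ℝ (EuclideanSpace ℝ (Fin (2 * d))))
    (hcompl : IsCompl V₁ V₂)
    (hV₁ : ∀ x ∈ V₁, f x ∈ V₁) (hV₂ : ∀ x ∈ V₂, f x ∈ V₂)
    (heig : ∀ μ : ℂ,
      ¬(((f.restrict hV₁).charpoly.map (algebraMap ℝ ℂ)).IsRoot μ ∧
        ((f.restrict hV₂).charpoly.map (algebraMap ℝ ℂ)).IsRoot μ))
    (hint : ∀ n : Fin (2 * d) → ℤ,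
      ((WithLp.equiv 2 (Fin (2 * d) → ℝ)).symm fun i => (n i : ℝ)) ∈ V₁ → n = 0) :
    ∃ C : ℝ, 0 < C ∧ ∀ n : Fin (2 * d) → ℤ, n ≠ 0 →
      C / ‖(WithLp.equiv 2 (Fin (2 * d) → ℝ)).symm (fun i => (n i : ℝ))‖
          ^ (Module.finrank ℝ V₁) ≤
        Metric.infDist ((WithLp.equiv 2 (Fin (2 * d) → ℝ)).symm fun i => (n i : ℝ))
          (V₁ : Set (EuclideanSpace ℝ (Fin (2 * d)))) := by
  classical
  set m := Module.finrank ℝ V₁ with hm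
  set p₁ := (f.restrict hV₁).charpoly with hp₁
  set p₂ := (f.restrict hV₂).charpoly with hp₂
  have hp₁0 : p₁ ≠ 0 := (LinearMap.charpoly_monic _).ne_zero
  obtain ⟨a, b, hab⟩ : IsCoprime p₁ p₂ := coprime_of_no_common_root' p₁ p₂ hp₁0 heig
  -- the characteristic polynomials kill the respective subspaces
  have hkill₁ : ∀ x ∈ V₁, Polynomial.aeval f p₁ x = 0 := by
    intro x hx
    rw [aeval_restrict_apply' f V₁ hV₁ p₁ hx, hp₁, LinearMap.aeval_self_charpoly]
    simp
  have hkill₂ : ∀ x ∈ V₂, Polynomial.aeval f p₂ x = 0 := by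
    intro x hx
    rw [aeval_restrict_apply' f V₂ hV₂ p₂ hx, hp₂, LinearMap.aeval_self_charpoly]
    simp
  -- the projections onto V₁ (along V₂) and onto V₂ (along V₁), as polynomials in f
  set P₁ := Polynomial.aeval f (b * p₂) with hP₁def
  set P₂ := Polynomial.aeval f (a * p₁) with hP₂def
  have hP₁₂ : ∀ x, P₁ x + P₂ x = x := by
    intro x
    rw [hP₁def, hP₂def, ← LinearMap.add_apply, ← map_add]
    have h1 : b * p₂ + a * p₁ = 1 := by linear_combination hab
    rw [h1, _root_.map_one, Module.End.one_apply]
  have hP₁V₂ : ∀ x ∈ V₂, P₁ x = 0 := by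
    intro x hx
    rw [hP₁def, _root_.map_mul, Module.End.mul_apply, hkill₂ x hx, map_zero]
  have hP₂V₁ : ∀ x ∈ V₁, P₂ x = 0 := by
    intro x hx
    rw [hP₂def, _root_.map_mul, Module.End.mul_apply, hkill₁ x hx, map_zero]
  have hP₁V₁ : ∀ x ∈ V₁, P₁ x = x := by
    intro x hx
    have := hP₁₂ x
    rwa [hP₂V₁ x hx, add_zero] at this
  have hP₂V₂ : ∀ x ∈ V₂, P₂ x = x := by
    intro x hx
    have := hP₁₂ x
    rwa [hP₁V₂ x hx, zero_add] at this
  have hdecomp : ∀ x : EuclideanSpace ℝ (Fin (2 * d)), ∃ x₁ ∈ V₁, ∃ x₂ ∈ V₂, x = x₁ + x₂ := by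
    intro x
    have hx : x ∈ V₁ ⊔ V₂ := by rw [hcompl.sup_eq_top]; trivial
    obtain ⟨x₁, hx₁, x₂, hx₂, hsum⟩ := Submodule.mem_sup.mp hx
    exact ⟨x₁, hx₁, x₂, hx₂, hsum.symm⟩
  have hP₁mem : ∀ x, P₁ x ∈ V₁ := by
    intro x
    obtain ⟨x₁, hx₁, x₂, hx₂, rfl⟩ := hdecomp x
    rw [map_add, hP₁V₂ x₂ hx₂, add_zero, hP₁V₁ x₁ hx₁]
    exact hx₁
  have hP₂mem : ∀ x, P₂ x ∈ V₂ := by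
    intro x
    obtain ⟨x₁, hx₁, x₂, hx₂, rfl⟩ := hdecomp x
    rw [map_add, hP₂V₁ x₁ hx₁, zero_add, hP₂V₂ x₂ hx₂]
    exact hx₂
  -- commutation with powers of f
  have hP₁pow : ∀ (j : ℕ) (x : EuclideanSpace ℝ (Fin (2 * d))), P₁ ((f ^ j) x) = (f ^ j) (P₁ x) := by
    intro j x
    have := aeval_comm_apply' f (b * p₂) (Polynomial.X ^ j) x
    rwa [Polynomial.aeval_X_pow] at this
  have hP₂pow : ∀ (j : ℕ) (x : EuclideanSpace ℝ (Fin (2 * d))), P₂ ((f ^ j) x) = (f ^ j) (P₂ x) := by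
    intro j x
    have := aeval_comm_apply' f (a * p₁) (Polynomial.X ^ j) x
    rwa [Polynomial.aeval_X_pow] at this
  -- norm bounds
  set Cf : ℝ := max 1 ‖LinearMap.toContinuousLinearMap f‖ with hCfdef
  have hCf1 : (1 : ℝ) ≤ Cf := le_max_left _ _
  have hCf0 : (0 : ℝ) < Cf := lt_of_lt_of_le one_pos hCf1
  have hCf : ∀ x : EuclideanSpace ℝ (Fin (2 * d)), ‖f x‖ ≤ Cf * ‖x‖ := by
    intro x
    have h1 := (LinearMap.toContinuousLinearMap f).le_opNorm x
    have h2 : (LinearMap.toContinuousLinearMap f) x = f x := rfl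
    rw [h2] at h1
    exact h1.trans (mul_le_mul_of_nonneg_right (le_max_right _ _) (norm_nonneg x))
  have hCfpow : ∀ (j : ℕ) (x : EuclideanSpace ℝ (Fin (2 * d))), ‖(f ^ j) x‖ ≤ Cf ^ j * ‖x‖ := by
    intro j
    induction j with
    | zero => intro x; simp
    | succ k ih =>
        intro x
        have h1 : (f ^ (k + 1)) x = (f ^ k) (f x) := by
          rw [pow_succ, Module.End.mul_apply]
        rw [h1]
        calc ‖(f ^ k) (f x)‖ ≤ Cf ^ k * ‖f x‖ := ih (f x)
          _ ≤ Cf ^ k * (Cf * ‖x‖) :=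
              mul_le_mul_of_nonneg_left (hCf x) (pow_nonneg hCf0.le k)
          _ = Cf ^ (k + 1) * ‖x‖ := by ring
  set Cp : ℝ := max 1 ‖LinearMap.toContinuousLinearMap P₂‖ with hCpdef
  have hCp1 : (1 : ℝ) ≤ Cp := le_max_left _ _
  have hCp0 : (0 : ℝ) < Cp := lt_of_lt_of_le one_pos hCp1
  have hCp : ∀ x : EuclideanSpace ℝ (Fin (2 * d)), ‖P₂ x‖ ≤ Cp * ‖x‖ := by
    intro x
    have h1 := (LinearMap.toContinuousLinearMap P₂).le_opNorm x
    have h2 : (LinearMap.toContinuousLinearMap P₂) x = P₂ x := rfl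
    rw [h2] at h1
    exact h1.trans (mul_le_mul_of_nonneg_right (le_max_right _ _) (norm_nonneg x))
  -- the global constant
  set Cm : ℝ := (Nat.factorial (m + 1) : ℝ) * (m + 1) ^ 2 * Cf ^ (2 * m + 2 * m * m)
    with hCmdef
  have hCm1 : (1 : ℝ) ≤ Cm := by
    have h1 : (1 : ℝ) ≤ (Nat.factorial (m + 1) : ℝ) := by
      exact_mod_cast Nat.one_le_iff_ne_zero.mpr (Nat.factorial_ne_zero (m + 1))
    have h2 : (1 : ℝ) ≤ ((m : ℕ) + 1 : ℝ) ^ 2 := by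
      have h0 : (0 : ℝ) ≤ (m : ℝ) := Nat.cast_nonneg m
      nlinarith
    have h3 : (1 : ℝ) ≤ Cf ^ (2 * m + 2 * m * m) := one_le_pow₀ hCf1
    have h12 : (1 : ℝ) ≤ (Nat.factorial (m + 1) : ℝ) * ((m : ℕ) + 1 : ℝ) ^ 2 := by nlinarith
    rw [hCmdef]
    nlinarith
  have hCm0 : (0 : ℝ) < Cm := lt_of_lt_of_le one_pos hCm1
  have hsqCm : (0 : ℝ) < Real.sqrt Cm := Real.sqrt_pos.mpr hCm0
  refine ⟨1 / (Cp * Real.sqrt Cm), by positivity, ?_⟩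
  intro n hn
  set v : EuclideanSpace ℝ (Fin (2 * d)) :=
    (WithLp.equiv 2 (Fin (2 * d) → ℝ)).symm (fun i => (n i : ℝ)) with hvdef
  have hvV₁ : v ∉ V₁ := fun h => hn (hint n h)
  have hv1 : (1 : ℝ) ≤ ‖v‖ := by
    obtain ⟨i, hi⟩ := Function.ne_iff.mp hn
    have hcoord : v i = (n i : ℝ) := rfl
    have h2 : (1 : ℝ) ≤ |(n i : ℝ)| := by
      rw [← Int.cast_abs]
      exact_mod_cast Int.one_le_abs (by simpa using hi)
    have h1 : (1 : ℝ) ≤ ‖v i‖ ^ 2 := by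
      rw [hcoord, Real.norm_eq_abs]
      nlinarith
    rw [EuclideanSpace.norm_eq]
    have hsum : (1 : ℝ) ≤ ∑ k, ‖v k‖ ^ 2 := by
      refine h1.trans ?_
      exact Finset.single_le_sum (fun k _ => sq_nonneg ‖v k‖) (Finset.mem_univ i)
    calc (1 : ℝ) = Real.sqrt 1 := (Real.sqrt_one).symm
      _ ≤ Real.sqrt (∑ k, ‖v k‖ ^ 2) := Real.sqrt_le_sqrt hsum
  have hv0 : (0 : ℝ) < ‖v‖ := lt_of_lt_of_le one_pos hv1
  -- the orbit of v consists of integer vectors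
  have hfint : ∀ w : Fin (2 * d) → ℤ,
      f ((WithLp.equiv 2 (Fin (2 * d) → ℝ)).symm (fun i => (w i : ℝ)))
        = (WithLp.equiv 2 (Fin (2 * d) → ℝ)).symm (fun i => ((A.mulVec w) i : ℝ)) := by
    intro w
    rw [hf, Matrix.toEuclideanLin_apply]
    congr 1
    change (A.map ((↑) : ℤ → ℝ)).mulVec (fun i => (w i : ℝ)) = _
    funext i
    simp only [Matrix.mulVec, dotProduct, Matrix.map_apply]
    push_cast
    rfl
  have horb : ∀ j : ℕ, (f ^ j) v =
      (WithLp.equiv 2 (Fin (2 * d) → ℝ)).symm (fun i => (((A ^ j).mulVec n) i : ℝ)) := by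
    intro j
    induction j with
    | zero => simp [hvdef]
    | succ k ih =>
        have h1 : (f ^ (k + 1)) v = f ((f ^ k) v) := by
          rw [pow_succ', Module.End.mul_apply]
        rw [h1, ih, hfint ((A ^ k).mulVec n)]
        congr 1
        funext i
        rw [Matrix.mulVec_mulVec, ← pow_succ']
  set u₁ : EuclideanSpace ℝ (Fin (2 * d)) := P₁ v with hu₁def
  set u₂ : EuclideanSpace ℝ (Fin (2 * d)) := P₂ v with hu₂def
  have hu₂0 : u₂ ≠ 0 := by
    intro h0
    apply hvV₁
    have := hP₁₂ v
    rw [← hu₁def, ← hu₂def, h0, add_zero] at this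
    rw [← this]
    exact hP₁mem v
  -- find the critical length t
  have hQm : ¬ LinearIndependent ℝ (fun j : Fin (m + 1) => P₁ ((f ^ (j : ℕ)) v)) := by
    intro hLI
    have hg : LinearIndependent ℝ
        (fun j : Fin (m + 1) => (⟨P₁ ((f ^ (j : ℕ)) v), hP₁mem _⟩ : V₁)) := by
      refine LinearIndependent.of_comp V₁.subtype ?_
      exact hLI
    have hcard := hg.fintype_card_le_finrank
    rw [Fintype.card_fin] at hcard
    omega
  obtain ⟨t, htQ, htmin⟩ : ∃ t : ℕ,
      (¬ LinearIndependent ℝ (fun j : Fin (t + 1) => P₁ ((f ^ (j : ℕ)) v))) ∧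
      ∀ k < t, LinearIndependent ℝ (fun j : Fin (k + 1) => P₁ ((f ^ (j : ℕ)) v)) := by
    have hQ : ∃ k, ¬ LinearIndependent ℝ (fun j : Fin (k + 1) => P₁ ((f ^ (j : ℕ)) v)) :=
      ⟨m, hQm⟩
    exact ⟨Nat.find hQ, Nat.find_spec hQ, fun k hk => not_not.mp (Nat.find_min hQ hk)⟩
  have ht_le : t ≤ m := by
    by_contra hlt
    exact hQm (htmin m (by omega))
  have htind : LinearIndependent ℝ (fun j : Fin t => P₁ ((f ^ (j : ℕ)) v)) := by
    cases t with
    | zero => exact linearIndependent_empty_type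
    | succ t' => exact htmin t' (Nat.lt_succ_self t')
  obtain ⟨c, hcsum, jne, hcjne⟩ := Fintype.not_linearIndependent_iff.mp htQ
  obtain ⟨j₀, _, hjmax⟩ := Finset.exists_max_image (Finset.univ : Finset (Fin (t + 1)))
    (fun j => |c j|) ⟨jne, Finset.mem_univ jne⟩
  set K := |c j₀| with hKdef
  have hK0 : (0 : ℝ) < K := lt_of_lt_of_le (abs_pos.mpr hcjne) (hjmax jne (Finset.mem_univ jne))
  -- independence of the orbit
  have hindu₁ : LinearIndependent ℝ (fun j : Fin t => (f ^ (j : ℕ)) u₁) := by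
    have heq : (fun j : Fin t => (f ^ (j : ℕ)) u₁) = (fun j : Fin t => P₁ ((f ^ (j : ℕ)) v)) :=
      funext fun j => (hP₁pow (j : ℕ) v).symm
    rw [heq]
    exact htind
  have hLIe : LinearIndependent ℝ (fun j : Fin (t + 1) => (f ^ (j : ℕ)) v) :=
    indep_orbit' f v u₁ u₂ p₁ p₂ a b hab rfl rfl
      (hkill₁ u₁ (hP₁mem v)) (hkill₂ u₂ (hP₂mem v)) hu₂0 t hindu₁
  -- coordinates
  set N : Fin (t + 1) → (Fin (2 * d) → ℤ) := fun j => (A ^ (j : ℕ)).mulVec n with hNdef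
  set e : Fin (t + 1) → EuclideanSpace ℝ (Fin (2 * d)) := fun j => (f ^ (j : ℕ)) v with hedef
  have he : ∀ j : Fin (t + 1),
      e j = (WithLp.equiv 2 (Fin (2 * d) → ℝ)).symm (fun i => (N j i : ℝ)) :=
    fun j => horb (j : ℕ)
  set Bint : Matrix (Fin (2 * d)) (Fin (t + 1)) ℤ := Matrix.of (fun i j => N j i) with hBintdef
  set B : Matrix (Fin (2 * d)) (Fin (t + 1)) ℝ :=
    Matrix.of (fun i j => (N j i : ℝ)) with hBdef
  have hBmap : B = Bint.map (Int.castRingHom ℝ) := rfl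
  have hcols : LinearIndependent ℝ (fun j (i : Fin (2 * d)) => B i j) := by
    have h2 := hLIe.map' (WithLp.linearEquiv 2 ℝ (Fin (2 * d) → ℝ)).toLinearMap
      (LinearEquiv.ker _)
    have h3 : ((WithLp.linearEquiv 2 ℝ (Fin (2 * d) → ℝ)).toLinearMap ∘
        fun j : Fin (t + 1) => (f ^ (j : ℕ)) v) = (fun j (i : Fin (2 * d)) => B i j) := by
      funext j
      have h4 : (f ^ (j : ℕ)) v = e j := rfl
      rw [Function.comp_apply, LinearEquiv.coe_coe, h4, he j]
      rfl
    rw [← h3]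
    exact h2
  have hgram : (Bᵀ * B).det = (((Bintᵀ * Bint).det : ℤ) : ℝ) := by
    rw [hBmap, ← Matrix.transpose_map, ← Matrix.map_mul]
    rw [show (Bintᵀ * Bint).map ⇑(Int.castRingHom ℝ)
      = (Int.castRingHom ℝ).mapMatrix (Bintᵀ * Bint) from rfl, ← RingHom.map_det]
    rfl
  have habsdet : (1 : ℝ) ≤ |(Bᵀ * B).det| := by
    have h0 : (Bᵀ * B).det ≠ 0 := det_gram_ne_zero' B hcols
    rw [hgram] at h0 ⊢
    have h1 : (Bintᵀ * Bint).det ≠ 0 := fun h => h0 (by rw [h]; simp)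
    rw [← Int.cast_abs]
    exact_mod_cast Int.one_le_abs h1
  -- the modified matrix with column j₀ replaced by the small combination x
  set x : EuclideanSpace ℝ (Fin (2 * d)) := ∑ j : Fin (t + 1), c j • e j with hxdef
  have hP₁x : P₁ x = 0 := by
    rw [hxdef, map_sum, ← hcsum]
    exact Finset.sum_congr rfl (fun j _ => by rw [_root_.map_smul])
  have hx2 : x = ∑ j : Fin (t + 1), c j • (f ^ (j : ℕ)) u₂ := by
    have h1 := hP₁₂ x
    rw [hP₁x, zero_add] at h1
    rw [← h1, hxdef, map_sum]
    refine Finset.sum_congr rfl (fun j _ => ?_)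
    rw [_root_.map_smul]
    have : P₂ (e j) = (f ^ (j : ℕ)) u₂ := by
      rw [show e j = (f ^ (j : ℕ)) v from rfl, hP₂pow (j : ℕ) v]
    rw [this]
  have hxnorm : ‖x‖ ≤ (t + 1 : ℝ) * K * Cf ^ t * ‖u₂‖ := by
    rw [hx2]
    refine (norm_sum_le _ _).trans ?_
    have hterm : ∀ j : Fin (t + 1), ‖c j • (f ^ (j : ℕ)) u₂‖ ≤ K * (Cf ^ t * ‖u₂‖) := by
      intro j
      rw [norm_smul, Real.norm_eq_abs]
      have h1 : |c j| ≤ K := hjmax j (Finset.mem_univ j)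
      have h2 : ‖(f ^ (j : ℕ)) u₂‖ ≤ Cf ^ t * ‖u₂‖ := by
        refine (hCfpow (j : ℕ) u₂).trans ?_
        have : Cf ^ (j : ℕ) ≤ Cf ^ t := pow_le_pow_right₀ hCf1 (Fin.is_le j)
        exact mul_le_mul_of_nonneg_right this (norm_nonneg _)
      exact mul_le_mul h1 h2 (norm_nonneg _) (le_of_lt hK0)
    refine (Finset.sum_le_card_nsmul _ _ _ (fun j _ => hterm j)).trans ?_
    simp only [Finset.card_univ, Fintype.card_fin, nsmul_eq_mul]
    push_cast
    ring_nf
    exact le_refl _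
  have henorm : ∀ j : Fin (t + 1), ‖e j‖ ≤ Cf ^ t * ‖v‖ := by
    intro j
    have h2 := hCfpow (j : ℕ) v
    refine h2.trans ?_
    have : Cf ^ (j : ℕ) ≤ Cf ^ t := pow_le_pow_right₀ hCf1 (Fin.is_le j)
    exact mul_le_mul_of_nonneg_right this (norm_nonneg _)
  set T : Matrix (Fin (t + 1)) (Fin (t + 1)) ℝ :=
    (1 : Matrix (Fin (t + 1)) (Fin (t + 1)) ℝ).updateCol j₀ c with hTdef
  have hdetT : T.det = c j₀ := by
    rw [hTdef, ← Matrix.cramer_apply, Matrix.cramer_one]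
    rfl
  -- the coordinates of the modified family
  set e' : Fin (t + 1) → EuclideanSpace ℝ (Fin (2 * d)) := Function.update e j₀ x with he'def
  have hBT : ∀ (i : Fin (2 * d)) (j : Fin (t + 1)), (B * T) i j = e' j i := by
    intro i j
    rcases eq_or_ne j j₀ with rfl | hne
    · have h1 : (B * T) i j = ∑ k, B i k * c k := by
        simp only [Matrix.mul_apply, hTdef]
        refine Finset.sum_congr rfl (fun k _ => ?_)
        rw [Matrix.updateCol_self]
      rw [h1, he'def, Function.update_self, hxdef]
      have hsum_apply : ∀ (s : Finset (Fin (t + 1))),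
          (∑ j ∈ s, c j • e j) i = ∑ j ∈ s, c j * e j i := by
        intro s
        induction s using Finset.induction with
        | empty => rfl
        | insert _ _ hji ih =>
            rw [Finset.sum_insert ‹_›, Finset.sum_insert ‹_›, ← ih]
            rfl
      rw [hsum_apply Finset.univ]
      refine Finset.sum_congr rfl (fun k _ => ?_)
      rw [he k]
      rw [mul_comm]
      rfl
    · have h1 : (B * T) i j = B i j := by
        simp only [Matrix.mul_apply, hTdef]
        rw [Finset.sum_eq_single j]
        · rw [Matrix.updateCol_ne hne, Matrix.one_apply_eq, mul_one]
        · intro k _ hkj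
          rw [Matrix.updateCol_ne hne, Matrix.one_apply_ne hkj, mul_zero]
        · intro h; exact absurd (Finset.mem_univ j) h
      rw [h1, he'def, Function.update_of_ne hne]
      rw [he j]
      rfl
  -- entries of the new Gram matrix are bounded by products of norms
  set G' : Matrix (Fin (t + 1)) (Fin (t + 1)) ℝ := (B * T)ᵀ * (B * T) with hG'def
  have hG'entry : ∀ j k : Fin (t + 1), |G' j k| ≤ ‖e' j‖ * ‖e' k‖ := by
    intro j k
    have h1 : G' j k = ∑ i, e' j i * e' k i := by
      rw [hG'def, Matrix.mul_apply]
      exact Finset.sum_congr rfl (fun i _ => by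
        rw [Matrix.transpose_apply, hBT i j, hBT i k])
    have h2 : G' j k = inner ℝ (e' j) (e' k) := by
      rw [h1, PiLp.inner_apply]
      exact Finset.sum_congr rfl (fun i _ => by
        rw [RCLike.inner_apply, conj_trivial, mul_comm])
    rw [h2]
    exact abs_real_inner_le_norm _ _
  -- determinant computations
  have hdetG' : G'.det = (c j₀) ^ 2 * (Bᵀ * B).det := by
    have hassoc : G' = Tᵀ * (Bᵀ * B) * T := by
      rw [hG'def, Matrix.transpose_mul, Matrix.mul_assoc Tᵀ Bᵀ (B * T),
        ← Matrix.mul_assoc Bᵀ B T, ← Matrix.mul_assoc]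
    rw [hassoc, Matrix.det_mul, Matrix.det_mul, Matrix.det_transpose, hdetT]
    ring
  -- upper bound on the Gram determinant of the modified family
  have hup : |G'.det| ≤ (Nat.factorial (t + 1) : ℝ) * (∏ j, ‖e' j‖) ^ 2 :=
    abs_det_le_fact' G' (fun j => ‖e' j‖) hG'entry
  have hprodnn : (0 : ℝ) ≤ ∏ j, ‖e' j‖ := Finset.prod_nonneg (fun j _ => norm_nonneg _)
  have hprod : ∏ j, ‖e' j‖ ≤ ‖x‖ * (Cf ^ t * ‖v‖) ^ t := by
    rw [← Finset.mul_prod_erase Finset.univ _ (Finset.mem_univ j₀)]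
    have h1 : ‖e' j₀‖ = ‖x‖ := by rw [he'def, Function.update_self]
    rw [h1]
    refine mul_le_mul_of_nonneg_left ?_ (norm_nonneg x)
    calc ∏ j ∈ Finset.univ.erase j₀, ‖e' j‖
        ≤ ∏ _j ∈ Finset.univ.erase j₀, (Cf ^ t * ‖v‖) := by
          refine Finset.prod_le_prod (fun j _ => norm_nonneg _) (fun j hj => ?_)
          rw [he'def, Function.update_of_ne (Finset.ne_of_mem_erase hj)]
          exact henorm j
      _ = (Cf ^ t * ‖v‖) ^ t := by
          rw [Finset.prod_const, Finset.card_erase_of_mem (Finset.mem_univ j₀),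
            Finset.card_univ, Fintype.card_fin]
          norm_num
  have hK2 : K ^ 2 ≤ |G'.det| := by
    have h1 : |G'.det| = K ^ 2 * |(Bᵀ * B).det| := by
      rw [hdetG', abs_mul, abs_of_nonneg (sq_nonneg (c j₀)), hKdef, sq_abs]
    rw [h1]
    calc K ^ 2 = K ^ 2 * 1 := (mul_one _).symm
      _ ≤ K ^ 2 * |(Bᵀ * B).det| := mul_le_mul_of_nonneg_left habsdet (sq_nonneg K)
  -- combine everything
  set W : ℝ := (Cf ^ t * ‖v‖) ^ t with hWdef
  have hW0 : (0 : ℝ) ≤ W := by positivity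
  have hmain : K ^ 2 ≤ (Nat.factorial (t + 1) : ℝ) * (‖x‖ * W) ^ 2 := by
    refine hK2.trans (hup.trans ?_)
    have h2 : (∏ j, ‖e' j‖) ^ 2 ≤ (‖x‖ * W) ^ 2 := pow_le_pow_left₀ hprodnn hprod 2
    exact mul_le_mul_of_nonneg_left h2 (Nat.cast_nonneg _)
  have hxW : (‖x‖ * W) ^ 2 ≤ (((t : ℝ) + 1) * K * Cf ^ t * ‖u₂‖ * W) ^ 2 := by
    have h1 : ‖x‖ * W ≤ ((t : ℝ) + 1) * K * Cf ^ t * ‖u₂‖ * W := by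
      refine mul_le_mul_of_nonneg_right ?_ hW0
      exact_mod_cast hxnorm
    have h0 : (0 : ℝ) ≤ ‖x‖ * W := mul_nonneg (norm_nonneg x) hW0
    exact pow_le_pow_left₀ h0 h1 2
  have hZ : 1 ≤ (Nat.factorial (t + 1) : ℝ) * (((t : ℝ) + 1) * Cf ^ t * ‖u₂‖ * W) ^ 2 := by
    have hKK : K ^ 2 ≤ K ^ 2 * ((Nat.factorial (t + 1) : ℝ) *
        (((t : ℝ) + 1) * Cf ^ t * ‖u₂‖ * W) ^ 2) := by
      have h1 : K ^ 2 ≤ (Nat.factorial (t + 1) : ℝ) *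
          (((t : ℝ) + 1) * K * Cf ^ t * ‖u₂‖ * W) ^ 2 :=
        hmain.trans (mul_le_mul_of_nonneg_left hxW (Nat.cast_nonneg _))
      calc K ^ 2 ≤ (Nat.factorial (t + 1) : ℝ) *
          (((t : ℝ) + 1) * K * Cf ^ t * ‖u₂‖ * W) ^ 2 := h1
        _ = K ^ 2 * ((Nat.factorial (t + 1) : ℝ) *
            (((t : ℝ) + 1) * Cf ^ t * ‖u₂‖ * W) ^ 2) := by ring
    have hK2pos : (0 : ℝ) < K ^ 2 := by positivity
    exact (mul_le_mul_iff_right₀ hK2pos).mp (by rw [mul_one]; exact hKK)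
  -- rewrite the bound explicitly
  have hWsq : W ^ 2 = Cf ^ (2 * t * t) * ‖v‖ ^ (2 * t) := by
    rw [hWdef, ← pow_mul, mul_pow, ← pow_mul]
    ring_nf
  have hZ' : 1 ≤ ((Nat.factorial (t + 1) : ℝ) * ((t : ℝ) + 1) ^ 2 * Cf ^ (2 * t + 2 * t * t)) *
      (‖u₂‖ ^ 2 * ‖v‖ ^ (2 * t)) := by
    refine hZ.trans (le_of_eq ?_)
    rw [pow_add]
    calc (Nat.factorial (t + 1) : ℝ) * (((t : ℝ) + 1) * Cf ^ t * ‖u₂‖ * W) ^ 2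
        = (Nat.factorial (t + 1) : ℝ) * (((t : ℝ) + 1) ^ 2 * (Cf ^ t) ^ 2 * ‖u₂‖ ^ 2 * W ^ 2) := by
          ring
      _ = (Nat.factorial (t + 1) : ℝ) * (((t : ℝ) + 1) ^ 2 * (Cf ^ t) ^ 2 * ‖u₂‖ ^ 2 *
            (Cf ^ (2 * t * t) * ‖v‖ ^ (2 * t))) := by rw [hWsq]
      _ = (Nat.factorial (t + 1) : ℝ) * ((t : ℝ) + 1) ^ 2 * (Cf ^ (2 * t) * Cf ^ (2 * t * t)) *
            (‖u₂‖ ^ 2 * ‖v‖ ^ (2 * t)) := by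
          rw [← pow_mul]
          ring_nf
  have hfinal : 1 ≤ Cm * (‖u₂‖ ^ 2 * ‖v‖ ^ (2 * m)) := by
    refine hZ'.trans ?_
    have h1 : (Nat.factorial (t + 1) : ℝ) ≤ (Nat.factorial (m + 1) : ℝ) := by
      exact_mod_cast Nat.factorial_le (by omega)
    have h2 : ((t : ℝ) + 1) ^ 2 ≤ ((m : ℝ) + 1) ^ 2 := by
      have ht' : (t : ℝ) ≤ (m : ℝ) := by exact_mod_cast ht_le
      refine pow_le_pow_left₀ (by positivity) (by linarith only [ht']) 2
    have h3 : Cf ^ (2 * t + 2 * t * t) ≤ Cf ^ (2 * m + 2 * m * m) := by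
      refine pow_le_pow_right₀ hCf1 ?_
      have e2 : 2 * t * t ≤ 2 * m * m := Nat.mul_le_mul (by omega) ht_le
      omega
    have h4 : ‖v‖ ^ (2 * t) ≤ ‖v‖ ^ (2 * m) := pow_le_pow_right₀ hv1 (by omega)
    rw [hCmdef]
    have ht10 : (0 : ℝ) ≤ ((t : ℝ) + 1) ^ 2 := by positivity
    have hCfp0 : (0 : ℝ) ≤ Cf ^ (2 * t + 2 * t * t) := by positivity
    have hu0 : (0 : ℝ) ≤ ‖u₂‖ ^ 2 := sq_nonneg _
    refine mul_le_mul (mul_le_mul (mul_le_mul h1 h2 ht10 (Nat.cast_nonneg _)) h3 hCfp0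
      (by positivity)) (mul_le_mul_of_nonneg_left h4 hu0) (by positivity) (by positivity)
  -- from the quantitative bound to the distance estimate
  have ha2 : 1 ≤ (‖u₂‖ * (Real.sqrt Cm * ‖v‖ ^ m)) ^ 2 := by
    have heq : (‖u₂‖ * (Real.sqrt Cm * ‖v‖ ^ m)) ^ 2
        = Cm * (‖u₂‖ ^ 2 * ‖v‖ ^ (2 * m)) := by
      rw [mul_pow, mul_pow, Real.sq_sqrt hCm0.le, ← pow_mul]
      ring_nf
    rw [heq]
    exact hfinal
  have ha1 : 1 ≤ ‖u₂‖ * (Real.sqrt Cm * ‖v‖ ^ m) := by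
    have ha0 : (0 : ℝ) ≤ ‖u₂‖ * (Real.sqrt Cm * ‖v‖ ^ m) := by positivity
    by_contra hlt
    push_neg at hlt
    exact absurd ha2 (not_le.mpr (pow_lt_one₀ ha0 hlt two_ne_zero))
  have hinf : ‖u₂‖ / Cp ≤ Metric.infDist v (V₁ : Set (EuclideanSpace ℝ (Fin (2 * d)))) := by
    by_contra hlt
    push_neg at hlt
    obtain ⟨w, hw, hdw⟩ := (Metric.infDist_lt_iff ⟨0, V₁.zero_mem⟩).mp hlt
    have h2 : P₂ (v - w) = u₂ := by rw [map_sub, hP₂V₁ w hw, sub_zero]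
    have h3 : ‖u₂‖ ≤ Cp * dist v w := by
      rw [← h2, dist_eq_norm]
      exact hCp _
    rw [lt_div_iff₀ hCp0] at hdw
    rw [mul_comm] at hdw
    linarith only [h3, hdw]
  have hstep : 1 / (Cp * Real.sqrt Cm) / ‖v‖ ^ m ≤ ‖u₂‖ / Cp := by
    rw [div_div, div_le_div_iff₀ (by positivity) hCp0]
    calc 1 * Cp = Cp * 1 := by ring
      _ ≤ Cp * (‖u₂‖ * (Real.sqrt Cm * ‖v‖ ^ m)) := mul_le_mul_of_nonneg_left ha1 hCp0.le
      _ = ‖u₂‖ * (Cp * Real.sqrt Cm * ‖v‖ ^ m) := by ring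
  exact hstep.trans hinf
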